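/- arXiv:2411.16994 — 3 statements merged into one kernel-verified Lean document; each statement's English description precedes it below -/
import Mathlib

section
/- Every theorem of the conditional logic C2 is true at every world of every order model under its valuation (C2 is sound with respect to order models). -/
/-- Sentences of the language L: atoms p₀,p₁,…, negation, conjunction, and the
binary conditional `>` (written `cond`). -/
inductive Formula : Type
  | atom : ℕ → Formula
  | neg : Formula → Formula
  | conj : Formula → Formula → Formula
  | cond : Formula → Formula → Formula
  deriving DecidableEq

namespace Formula

/-- Material implication, defined as usual: p → q := ¬(p ∧ ¬q). -/
def impl (p q : Formula) : Formula := (p.conj q.neg).neg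
/-- Disjunction, defined as usual: p ∨ q := ¬(¬p ∧ ¬q). -/
def disj (p q : Formula) : Formula := (p.neg.conj q.neg).neg
/-- Material biconditional, defined as usual. -/
def biimp (p q : Formula) : Formula := (p.impl q).conj (q.impl p)
/-- □p abbreviates ¬p > p. -/
def box (p : Formula) : Formula := p.neg.cond p
/-- ◇p abbreviates ¬□¬p. -/
def dia (p : Formula) : Formula := p.neg.box.neg
/-- ⊥ abbreviates p₀ ∧ ¬p₀. -/
def bot : Formula := (atom 0).conj (atom 0).neg

end Formula

/-- `p` is a classical propositional tautology (treating conditional formulas and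
atoms alike as propositional atoms): every assignment of truth values that respects
¬ and ∧ makes `p` true. -/
def IsTautology (p : Formula) : Prop :=
  ∀ v : Formula → Prop,
    (∀ q, v q.neg ↔ ¬ v q) →
    (∀ q r, v (q.conj r) ↔ v q ∧ v r) →
    v p

/-- Derivability from the axioms of C2 (all classical tautologies, Identity,
Reciprocity, MP, CEM) together with extra axioms `Ax`, closed under Detachment and
Normality; i.e., the smallest extension of C2 containing `Ax` that is closed under
Detachment and Normality. -/
inductive DerivC2 (Ax : Formula → Prop) : Formula → Prop
  | extra {p : Formula} : Ax p → DerivC2 Ax p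
  | taut {p : Formula} : IsTautology p → DerivC2 Ax p
  | id (p : Formula) : DerivC2 Ax (p.cond p)
  | recip (p q r : Formula) :
      DerivC2 Ax (((p.cond q).conj ((q.cond p).conj (p.cond r))).impl (q.cond r))
  | mpAx (p q : Formula) : DerivC2 Ax ((p.cond q).impl (p.impl q))
  | cem (p q : Formula) : DerivC2 Ax ((p.cond q).disj (p.cond q.neg))
  | detach {p q : Formula} : DerivC2 Ax (p.impl q) → DerivC2 Ax p → DerivC2 Ax q
  | normality {p q r : Formula} (s : Formula) : DerivC2 Ax ((p.conj q).impl r) →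
      DerivC2 Ax (((s.cond p).conj (s.cond q)).impl (s.cond r))

/-- Stalnaker's conditional logic C2. -/
def C2 : Formula → Prop := DerivC2 (fun _ => False)

/-- An order frame: a nonempty type of worlds `W` together with, for each world
`w`, a strict well-order `lt w` (writing `lt w x y` for `x <_w y`) of a subset of
`W` (the field of `lt w`: the relation is transitive, well-founded, and connected
on its field), such that `x <_w y` implies `w = x` or `w <_w x`. -/
structure OrderFrame (W : Type) : Type where
  nonempty : Nonempty W
  lt : W → W → W → Prop
  trans : ∀ w x y z, lt w x y → lt w y z → lt w x z
  wf : ∀ w, WellFounded (lt w)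
  connected : ∀ w x y, (∃ z, lt w x z ∨ lt w z x) → (∃ z, lt w y z ∨ lt w z y) →
      x ≠ y → lt w x y ∨ lt w y x
  center : ∀ w x y, lt w x y → x = w ∨ lt w w x

namespace OrderFrame

variable {W : Type}

/-- Accessibility: `v ∈ R(w)` where `R(w) = {w} ∪ {v : w <_w v}`. -/
def acc (F : OrderFrame W) (w v : W) : Prop := v = w ∨ F.lt w w v

/-- `x ≤_w y` iff `x, y ∈ R(w)` and not `y <_w x`. -/
def wkle (F : OrderFrame W) (w x y : W) : Prop :=
  F.acc w x ∧ F.acc w y ∧ ¬ F.lt w y x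

end OrderFrame

/-- Truth at a world of an order model: atoms via the valuation `V`, Booleans
classically, and `p > q` is true at `w` iff either no world in `R(w)` satisfies `p`,
or there is `y ∈ R(w)` satisfying `p ∧ q` such that no `x <_w y` satisfies `p`. -/
def Truth {W : Type} (F : OrderFrame W) (V : ℕ → Set W) : Formula → W → Prop
  | .atom n, w => w ∈ V n
  | .neg p, w => ¬ Truth F V p w
  | .conj p q, w => Truth F V p w ∧ Truth F V q w
  | .cond p q, w =>
      (∀ v, F.acc w v → ¬ Truth F V p v) ∨
      ∃ y, F.acc w y ∧ Truth F V p y ∧ Truth F V q y ∧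
        ∀ x, F.lt w x y → ¬ Truth F V p x

/-! Stalnaker's conditional `p > q` holds at `w` exactly when `q` holds at the `<_w`-closest
`p`-world of `R(w)` (vacuously if there is none). Such a closest world exists by
well-foundedness and is unique because `<_w` is connected on `R(w)`; moreover `w` itself is
closest whenever it satisfies `p`, since nothing lies `<_w`-below `w`. With this reading every
axiom of C2 is valid and both rules preserve validity. -/

namespace OrderFrame

variable {W : Type} (F : OrderFrame W)

def IsClosest (w : W) (P : W → Prop) (y : W) : Prop :=
  F.acc w y ∧ P y ∧ ∀ x, F.lt w x y → ¬ P x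

variable {F}

lemma acc_self (w : W) : F.acc w w := Or.inl rfl

lemma acc_of_lt {w x y : W} (h : F.lt w x y) : F.acc w x :=
  F.center w x y h

lemma not_lt_center {w x : W} : ¬ F.lt w x w := by
  intro h
  rcases F.center w x w h with rfl | hwx
  · exact (F.wf x).irrefl.irrefl x h
  · exact (F.wf w).irrefl.irrefl w (F.trans w w x w hwx h)

lemma lt_or_lt_of_acc {w x y : W} (hx : F.acc w x) (hy : F.acc w y) (hne : x ≠ y) :
    F.lt w x y ∨ F.lt w y x := by
  have mem_field : ∀ {v}, F.acc w v → v ≠ w → ∃ z, F.lt w v z ∨ F.lt w z v :=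
    fun {v} hv hvw => ⟨w, Or.inr (hv.resolve_left hvw)⟩
  rcases eq_or_ne x w with rfl | hxw
  · exact Or.inl (hy.resolve_left hne.symm)
  rcases eq_or_ne y w with rfl | hyw
  · exact Or.inr (hx.resolve_left hxw)
  exact F.connected w x y (mem_field hx hxw) (mem_field hy hyw) hne

lemma exists_isClosest {w : W} {P : W → Prop} (h : ∃ v, F.acc w v ∧ P v) :
    ∃ y, F.IsClosest w P y := by
  obtain ⟨y, ⟨hy, hPy⟩, hmin⟩ := (F.wf w).has_min {v | F.acc w v ∧ P v} h
  exact ⟨y, hy, hPy, fun x hx hPx => hmin x ⟨acc_of_lt hx, hPx⟩ hx⟩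

lemma isClosest_self {w : W} {P : W → Prop} (hw : P w) : F.IsClosest w P w :=
  ⟨acc_self w, hw, fun _ h => absurd h not_lt_center⟩

lemma IsClosest.eq_of_swap {w y z : W} {P Q : W → Prop} (hy : F.IsClosest w P y)
    (hz : F.IsClosest w Q z) (hQy : Q y) (hPz : P z) : y = z := by
  by_contra hne
  rcases lt_or_lt_of_acc hy.1 hz.1 hne with h | h
  · exact hz.2.2 y h hQy
  · exact hy.2.2 z h hPz

lemma IsClosest.eq {w y z : W} {P : W → Prop} (hy : F.IsClosest w P y)
    (hz : F.IsClosest w P z) : y = z :=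
  hy.eq_of_swap hz hy.2.1 hz.2.1

end OrderFrame

section Semantics

open OrderFrame

variable {W : Type} {F : OrderFrame W} {V : ℕ → Set W} {p q r s : Formula} {w : W}

lemma truth_impl : Truth F V (p.impl q) w ↔ (Truth F V p w → Truth F V q w) := by
  simp only [Formula.impl, Truth]
  tauto

lemma truth_disj : Truth F V (p.disj q) w ↔ Truth F V p w ∨ Truth F V q w := by
  simp only [Formula.disj, Truth]
  tauto

lemma truth_cond :
    Truth F V (p.cond q) w ↔ ∀ y, F.IsClosest w (Truth F V p) y → Truth F V q y := by
  constructor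
  · rintro (hnone | ⟨y, hy, hpy, hqy, hmin⟩) z hz
    · exact absurd hz.2.1 (hnone z hz.1)
    · rwa [← IsClosest.eq ⟨hy, hpy, hmin⟩ hz]
  · intro h
    by_cases hex : ∃ v, F.acc w v ∧ Truth F V p v
    · obtain ⟨y, hy⟩ := exists_isClosest hex
      exact Or.inr ⟨y, hy.1, hy.2.1, h y hy, hy.2.2⟩
    · exact Or.inl fun v hv hpv => hex ⟨v, hv, hpv⟩

lemma truth_of_isTautology (hp : IsTautology p) : Truth F V p w :=
  hp (Truth F V · w) (fun _ => Iff.rfl) (fun _ _ => Iff.rfl)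

lemma truth_identity : Truth F V (p.cond p) w :=
  truth_cond.2 fun _ hy => hy.2.1

lemma truth_reciprocity :
    Truth F V (((p.cond q).conj ((q.cond p).conj (p.cond r))).impl (q.cond r)) w := by
  rw [truth_impl]
  rintro ⟨hpq, hqp, hpr⟩
  refine truth_cond.2 fun y hy => ?_
  have hpy : Truth F V p y := truth_cond.1 hqp y hy
  obtain ⟨z, hz⟩ := exists_isClosest ⟨y, hy.1, hpy⟩
  have hyz : y = z := hy.eq_of_swap hz hpy (truth_cond.1 hpq z hz)
  exact hyz ▸ truth_cond.1 hpr z hz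

lemma truth_mp : Truth F V ((p.cond q).impl (p.impl q)) w := by
  simp only [truth_impl, truth_cond]
  exact fun h hpw => h w (isClosest_self hpw)

lemma truth_cem : Truth F V ((p.cond q).disj (p.cond q.neg)) w := by
  rw [truth_disj, truth_cond, truth_cond]
  by_cases hex : ∃ y, F.IsClosest w (Truth F V p) y
  · obtain ⟨y, hy⟩ := hex
    by_cases hqy : Truth F V q y
    · exact Or.inl fun z hz => IsClosest.eq hy hz ▸ hqy
    · exact Or.inr fun z hz => IsClosest.eq hy hz ▸ hqy
  · exact Or.inl fun y hy => absurd ⟨y, hy⟩ hex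

lemma truth_normality (h : ∀ v, Truth F V ((p.conj q).impl r) v) :
    Truth F V (((s.cond p).conj (s.cond q)).impl (s.cond r)) w := by
  rw [truth_impl]
  rintro ⟨hsp, hsq⟩
  exact truth_cond.2 fun y hy =>
    truth_impl.1 (h y) ⟨truth_cond.1 hsp y hy, truth_cond.1 hsq y hy⟩

end Semantics

/-- C2 is sound with respect to order models: every theorem of C2 is
true at every world of every order model under its valuation. -/
theorem c2_sound_for_order_models (p : Formula) (hp : C2 p) :
    ∀ (W : Type) (F : OrderFrame W) (V : ℕ → Set W) (w : W), Truth F V p w := by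
  induction hp with
  | extra h => exact h.elim
  | taut h => exact fun _ _ _ _ => truth_of_isTautology h
  | id => exact fun _ _ _ _ => truth_identity
  | recip => exact fun _ _ _ _ => truth_reciprocity
  | mpAx => exact fun _ _ _ _ => truth_mp
  | cem => exact fun _ _ _ _ => truth_cem
  | detach _ _ ih₁ ih₂ => exact fun W F V w => truth_impl.1 (ih₁ W F V w) (ih₂ W F V w)
  | normality _ _ ih => exact fun W F V _ => truth_normality (ih W F V)
end

section
/- For any sentence p in the modal fragment of L, p is a theorem of C2 if and only if p is a theorem of the modal logic KT. -/
/-- The modal fragment of L: sentences built from atoms using ¬, ∧, and □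
(where □p abbreviates ¬p > p). -/
inductive IsModal : Formula → Prop
  | atom (n : ℕ) : IsModal (.atom n)
  | neg {p : Formula} : IsModal p → IsModal p.neg
  | conj {p q : Formula} : IsModal p → IsModal q → IsModal (p.conj q)
  | box {p : Formula} : IsModal p → IsModal p.box

/-- The modal logic KT: the smallest set of modal sentences containing all classical
propositional tautologies and all instances of K: □(p→q)→(□p→□q) and T: □p→p,
closed under Detachment and Necessitation. -/
inductive KT : Formula → Prop
  | taut {p : Formula} : IsModal p → IsTautology p → KT p
  | k (p q : Formula) : IsModal p → IsModal q →
      KT ((p.impl q).box.impl (p.box.impl q.box))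
  | t (p : Formula) : IsModal p → KT (p.box.impl p)
  | detach {p q : Formula} : KT (p.impl q) → KT p → KT q
  | nec {p : Formula} : KT p → KT p.box

-- ===== selection semantics =====
section Sel
variable {W : Type} (R : W → W → Prop) (V : ℕ → W → Prop)

open Classical in
noncomputable def pick (S : Set W) (w : W) : Option W :=
  if w ∈ S then some w
  else if h : S.Nonempty then some ((IsWellFounded.wf (r := @WellOrderingRel W)).min S h) else none

lemma pick_mem {S : Set W} {w v : W} (h : pick S w = some v) : v ∈ S := by
  classical
  unfold pick at h
  split at h
  · cases h; assumption
  · split at h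
    · cases h; exact WellFounded.min_mem _ S _
    · cases h

lemma pick_self {S : Set W} {w : W} (h : w ∈ S) : pick S w = some w := by
  unfold pick; simp [h]

lemma pick_some {S : Set W} (w : W) (h : S.Nonempty) : ∃ v, pick S w = some v := by
  classical
  unfold pick
  split
  · exact ⟨w, rfl⟩
  · simp [h]

lemma pick_cases {S : Set W} {w u : W} (h : pick S w = some u) :
    (w ∈ S ∧ u = w) ∨ (w ∉ S ∧ ∀ x ∈ S, ¬ WellOrderingRel x u) := by
  classical
  unfold pick at h
  split at h
  · exact Or.inl ⟨‹_›, (Option.some.inj h).symm⟩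
  · split at h
    · have he := Option.some.inj h
      subst he
      exact Or.inr ⟨‹_›, fun x hx =>
        WellFounded.not_lt_min (IsWellFounded.wf (r := @WellOrderingRel W)) S hx⟩
    · cases h

lemma pick_unique {S T : Set W} {w u v : W} (hS : pick S w = some u) (hT : pick T w = some v)
    (huT : u ∈ T) (hvS : v ∈ S) : u = v := by
  rcases pick_cases hS with ⟨hwS, hu⟩ | ⟨hwS, hmu⟩
  · rcases pick_cases hT with ⟨hwT, hv⟩ | ⟨hwT, hmv⟩
    · rw [hu, hv]
    · exact absurd (hu ▸ huT) hwT
  · rcases pick_cases hT with ⟨hwT, hv⟩ | ⟨hwT, hmv⟩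
    · exact absurd (hv ▸ hvS) hwS
    · rcases trichotomous (r := @WellOrderingRel W) u v with h | h | h
      · exact absurd h (hmv u huT)
      · exact h
      · exact absurd h (hmu v hvS)

def sat : Formula → W → Prop
  | .atom n, w => V n w
  | .neg A, w => ¬ sat A w
  | .conj A B, w => sat A w ∧ sat B w
  | .cond A B, w => ∀ v, pick {u | R w u ∧ sat A u} w = some v → sat B v

lemma sat_impl {A B : Formula} {w : W} : sat R V (A.impl B) w ↔ (sat R V A w → sat R V B w) := by
  simp only [Formula.impl, sat]; tauto

lemma sat_box {A : Formula} {w : W} (hrefl : Reflexive R) :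
    sat R V A.box w ↔ ∀ v, R w v → sat R V A v := by
  show (∀ v, pick {u | R w u ∧ ¬ sat R V A u} w = some v → sat R V A v) ↔ _
  constructor
  · intro h v hRv
    by_contra hA
    obtain ⟨x, hx⟩ := pick_some (S := {u | R w u ∧ ¬ sat R V A u}) w ⟨v, hRv, hA⟩
    exact (pick_mem hx).2 (h x hx)
  · intro h v hv
    exact absurd (h v (pick_mem hv).1) (pick_mem hv).2

theorem c2_sound (hrefl : Reflexive R) {p : Formula} (h : C2 p) : ∀ w, sat R V p w := by
  induction h with
  | extra h => exact absurd h (fun h => h)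
  | taut h => exact fun w => h (fun q => sat R V q w) (fun q => Iff.rfl) (fun q r => Iff.rfl)
  | id p => exact fun w v hv => (pick_mem hv).2
  | recip p q r =>
      intro w
      rw [sat_impl]
      rintro ⟨h1, h2, h3⟩ v hv
      have hvq : v ∈ {u | R w u ∧ sat R V q u} := pick_mem hv
      have hpv : sat R V p v := h2 v hv
      obtain ⟨u, hu⟩ := pick_some (S := {u | R w u ∧ sat R V p u}) w ⟨v, hvq.1, hpv⟩
      have huq : sat R V q u := h1 u hu
      have hvS : v ∈ {u | R w u ∧ sat R V p u} := ⟨hvq.1, hpv⟩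
      have huT : u ∈ {u | R w u ∧ sat R V q u} := ⟨(pick_mem hu : u ∈ {u | R w u ∧ sat R V p u}).1, huq⟩
      have := pick_unique hu hv huT hvS
      exact this ▸ h3 u hu
  | mpAx p q =>
      intro w
      rw [sat_impl, sat_impl]
      intro h hp
      exact h w (pick_self ⟨hrefl w, hp⟩)
  | cem p q =>
      intro w
      simp only [Formula.disj, sat]
      rintro ⟨h1, h2⟩
      push_neg at h1 h2
      obtain ⟨v1, hv1, hq1⟩ := h1
      obtain ⟨v2, hv2, hq2⟩ := h2
      rw [hv1] at hv2
      cases hv2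
      exact hq1 hq2
  | detach h1 h2 ih1 ih2 => exact fun w => (sat_impl R V).mp (ih1 w) (ih2 w)
  | normality s hpre ih =>
      intro w
      rw [sat_impl]
      rintro ⟨h1, h2⟩ v hv
      have hp := h1 v hv
      have hq := h2 v hv
      have := (sat_impl R V).mp (ih v)
      exact this ⟨hp, hq⟩

end Sel

-- ===== modal bookkeeping =====
namespace IsModal

lemma impl {p q : Formula} (hp : IsModal p) (hq : IsModal q) : IsModal (p.impl q) :=
  (hp.conj hq.neg).neg

lemma bot : IsModal Formula.bot := (IsModal.atom 0).conj (IsModal.atom 0).neg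

lemma of_neg {p : Formula} (h : IsModal p.neg) : IsModal p := by cases h; assumption

lemma of_conj_left {p q : Formula} (h : IsModal (p.conj q)) : IsModal p := by cases h; assumption

lemma of_conj_right {p q : Formula} (h : IsModal (p.conj q)) : IsModal q := by cases h; assumption

lemma of_box {p : Formula} (h : IsModal p.box) : IsModal p := by cases h; assumption

lemma of_impl_left {p q : Formula} (h : IsModal (p.impl q)) : IsModal p :=
  h.of_neg.of_conj_left

lemma of_impl_right {p q : Formula} (h : IsModal (p.impl q)) : IsModal q :=
  h.of_neg.of_conj_right.of_neg

end IsModal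

lemma kt_modal {p : Formula} (h : KT p) : IsModal p := by
  induction h with
  | taut hm _ => exact hm
  | k p q hp hq => exact ((hp.impl hq).box).impl (hp.box.impl hq.box)
  | t p hp => exact hp.box.impl hp
  | detach _ _ ih1 _ => exact ih1.of_impl_right
  | nec _ ih => exact ih.box

-- ===== list conjunction =====
def conjList : List Formula → Formula
  | [] => Formula.bot.neg
  | p :: l => p.conj (conjList l)

lemma isModal_conjList {l : List Formula} (h : ∀ q ∈ l, IsModal q) : IsModal (conjList l) := by
  induction l with
  | nil => exact IsModal.bot.neg
  | cons a l ih =>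
      exact (h a (by simp)).conj (ih (fun q hq => h q (by simp [hq])))

lemma v_conjList (v : Formula → Prop) (hn : ∀ q, v q.neg ↔ ¬ v q)
    (hc : ∀ q r, v (q.conj r) ↔ v q ∧ v r) :
    ∀ l : List Formula, v (conjList l) ↔ ∀ q ∈ l, v q := by
  intro l
  induction l with
  | nil => simp only [conjList, Formula.bot, hn, hc]; tauto
  | cons a l ih =>
      simp only [conjList, hc, ih, List.mem_cons]
      constructor
      · rintro ⟨ha, hl⟩ q (rfl | hq)
        · exact ha
        · exact hl q hq
      · intro h
        exact ⟨h a (Or.inl rfl), fun q hq => h q (Or.inr hq)⟩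

-- glue helpers
lemma kt_mp {a b : Formula} (ha : IsModal a) (hb : IsModal b)
    (ht : IsTautology (a.impl b)) (h : KT a) : KT b :=
  KT.detach (KT.taut (ha.impl hb) ht) h

lemma kt_mp2 {a b c : Formula} (ha : IsModal a) (hb : IsModal b) (hc : IsModal c)
    (ht : IsTautology (a.impl (b.impl c))) (h1 : KT a) (h2 : KT b) : KT c :=
  KT.detach (KT.detach (KT.taut (ha.impl (hb.impl hc)) ht) h1) h2

-- ===== consistency =====
def Consis (S : Set Formula) : Prop :=
  ∀ l : List Formula, (∀ q ∈ l, q ∈ S) → ¬ KT ((conjList l).impl Formula.bot)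

lemma kt_conj_mono {l l' : List Formula} (hl : ∀ q ∈ l, IsModal q) (hl' : ∀ q ∈ l', IsModal q)
    (hsub : ∀ q ∈ l, q ∈ l') (h : KT ((conjList l).impl Formula.bot)) :
    KT ((conjList l').impl Formula.bot) := by
  refine kt_mp ((isModal_conjList hl).impl IsModal.bot) ((isModal_conjList hl').impl IsModal.bot)
    ?_ h
  intro v hn hc
  have e1 := v_conjList v hn hc l
  have e2 := v_conjList v hn hc l'
  have hsv : (∀ q ∈ l', v q) → (∀ q ∈ l, v q) := fun h q hq => h q (hsub q hq)
  simp only [Formula.impl, Formula.bot, hn, hc, e1, e2]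
  tauto

-- ===== maximal consistent sets =====
def MCS (Γ : Set Formula) : Prop :=
  (∀ p ∈ Γ, IsModal p) ∧ Consis Γ ∧ ∀ p, IsModal p → Consis (insert p Γ) → p ∈ Γ

lemma consis_insert_elim {Γ : Set Formula} {p : Formula} (h : ¬ Consis (insert p Γ))
    (hΓ : ∀ q ∈ Γ, IsModal q) (hp : IsModal p) :
    ∃ l, (∀ q ∈ l, q ∈ Γ) ∧ (∀ q ∈ l, IsModal q) ∧ KT ((conjList (p :: l)).impl Formula.bot) := by
  classical
  unfold Consis at h
  push_neg at h
  obtain ⟨l0, hl0, hkt⟩ := h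
  refine ⟨l0.filter (fun q => q ≠ p), ?_, ?_, ?_⟩
  · intro q hq
    have := List.mem_filter.mp hq
    rcases hl0 q this.1 with h1 | h1
    · exact absurd h1 (by simpa using this.2)
    · exact h1
  · intro q hq
    have hq0 := (List.mem_filter.mp hq).1
    rcases hl0 q hq0 with h1 | h1
    · exact h1 ▸ hp
    · exact hΓ q h1
  · refine kt_conj_mono ?_ ?_ ?_ hkt
    · intro q hq
      rcases hl0 q hq with h1 | h1
      · exact h1 ▸ hp
      · exact hΓ q h1
    · intro q hq
      rcases List.mem_cons.mp hq with rfl | h1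
      · exact hp
      · rcases hl0 q (List.mem_filter.mp h1).1 with h2 | h2
        · exact h2 ▸ hp
        · exact hΓ q h2
    · intro q hq
      by_cases hqp : q = p
      · exact hqp ▸ List.mem_cons_self
      · exact List.mem_cons_of_mem _ (List.mem_filter.mpr ⟨hq, by simpa using hqp⟩)

lemma mcs_mem_of_list {Γ : Set Formula} (h : MCS Γ) {l : List Formula} {q : Formula}
    (hl : ∀ r ∈ l, r ∈ Γ) (hkt : KT ((conjList l).impl q)) (hq : IsModal q) : q ∈ Γ := by
  by_contra hqΓ
  have hni : ¬ Consis (insert q Γ) := fun hcon => hqΓ (h.2.2 q hq hcon)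
  obtain ⟨l2, hl2, hl2m, hkt2⟩ := consis_insert_elim hni h.1 hq
  have hlm : ∀ r ∈ l, IsModal r := fun r hr => h.1 r (hl r hr)
  have hkt3 : KT ((conjList (l ++ l2)).impl Formula.bot) := by
    refine kt_mp2 ((isModal_conjList hlm).impl hq)
      ((isModal_conjList (by
        intro r hr
        rcases List.mem_cons.mp hr with rfl | hr2
        · exact hq
        · exact hl2m r hr2)).impl IsModal.bot)
      ((isModal_conjList (by
        intro r hr
        rcases List.mem_append.mp hr with hr2 | hr2
        · exact hlm r hr2
        · exact hl2m r hr2)).impl IsModal.bot)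
      ?_ hkt hkt2
    intro v hn hc
    have e1 := v_conjList v hn hc l
    have e2 := v_conjList v hn hc (q :: l2)
    have e3 := v_conjList v hn hc (l ++ l2)
    have k1 : (∀ r ∈ l ++ l2, v r) → (∀ r ∈ l, v r) :=
      fun hh r hr => hh r (List.mem_append.mpr (Or.inl hr))
    have k2 : v q → (∀ r ∈ l ++ l2, v r) → (∀ r ∈ q :: l2, v r) := by
      rintro h1 h2 r hr
      rcases List.mem_cons.mp hr with rfl | hr2
      · exact h1
      · exact h2 r (List.mem_append.mpr (Or.inr hr2))
    simp only [Formula.impl, Formula.bot, hn, hc, e1, e2, e3]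
    tauto
  exact h.2.1 (l ++ l2) (by
    intro r hr
    rcases List.mem_append.mp hr with hr2 | hr2
    · exact hl r hr2
    · exact hl2 r hr2) hkt3

lemma mcs_thm {Γ : Set Formula} (h : MCS Γ) {p : Formula} (hp : KT p) : p ∈ Γ := by
  refine mcs_mem_of_list h (l := []) (fun r hr => absurd hr List.not_mem_nil) ?_ (kt_modal hp)
  refine kt_mp (kt_modal hp) ((isModal_conjList (by simp)).impl (kt_modal hp)) ?_ hp
  intro v hn hc
  simp only [Formula.impl, hn, hc]
  tauto

lemma mcs_mem_of_imp {Γ : Set Formula} (h : MCS Γ) {p q : Formula} (hpΓ : p ∈ Γ)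
    (hkt : KT (p.impl q)) (hq : IsModal q) : q ∈ Γ := by
  refine mcs_mem_of_list h (l := [p]) (by simpa using hpΓ) ?_ hq
  have hpm : IsModal p := h.1 p hpΓ
  refine kt_mp (hpm.impl hq) ((isModal_conjList (by simpa using hpm)).impl hq) ?_ hkt
  intro v hn hc
  have e1 := v_conjList v hn hc [p]
  have k1 : (∀ r ∈ [p], v r) ↔ v p := by
    constructor
    · exact fun h => h p (by simp)
    · intro h r hr
      rcases List.mem_cons.mp hr with rfl | hr2
      · exact h
      · simp at hr2
  simp only [Formula.impl, hn, hc, e1, k1]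
  tauto

lemma mcs_not_both {Γ : Set Formula} (h : MCS Γ) {p : Formula} (hp : p ∈ Γ)
    (hnp : p.neg ∈ Γ) : False := by
  have hpm : IsModal p := h.1 p hp
  refine h.2.1 [p, p.neg] (by
    intro q hq
    rcases List.mem_cons.mp hq with rfl | hq2
    · exact hp
    · simpa using (by simpa using hq2 : q = p.neg) ▸ hnp) ?_
  refine KT.taut ((isModal_conjList (by
    intro q hq
    rcases List.mem_cons.mp hq with rfl | hq2
    · exact hpm
    · exact (by simpa using hq2 : q = p.neg) ▸ hpm.neg)).impl IsModal.bot) ?_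
  intro v hn hc
  have e1 := v_conjList v hn hc [p, p.neg]
  simp only [Formula.impl, Formula.bot, hn, hc, e1]
  intro h1
  rcases h1 with ⟨h1, h2⟩
  have := h1 p (by simp)
  have := h1 p.neg (by simp)
  rw [hn] at this
  tauto

lemma mcs_neg_iff {Γ : Set Formula} (h : MCS Γ) {p : Formula} (hp : IsModal p) :
    p.neg ∈ Γ ↔ p ∉ Γ := by
  constructor
  · intro h1 h2
    exact mcs_not_both h h2 h1
  · intro h1
    by_contra h2
    have hni : ¬ Consis (insert p.neg Γ) := fun hcon => h2 (h.2.2 p.neg hp.neg hcon)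
    obtain ⟨l, hlΓ, hlm, hkt⟩ := consis_insert_elim hni h.1 hp.neg
    refine h1 (mcs_mem_of_list h hlΓ ?_ hp)
    refine kt_mp ((isModal_conjList (by
      intro q hq
      rcases List.mem_cons.mp hq with rfl | hq2
      · exact hp.neg
      · exact hlm q hq2)).impl IsModal.bot)
      ((isModal_conjList hlm).impl hp) ?_ hkt
    intro v hn hc
    have e1 := v_conjList v hn hc (p.neg :: l)
    have e2 := v_conjList v hn hc l
    have k1 : (∀ r ∈ l, v r) → ¬ v p → (∀ r ∈ p.neg :: l, v r) := by
      intro h1 h2 r hr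
      rcases List.mem_cons.mp hr with rfl | hr2
      · exact (hn p).mpr h2
      · exact h1 r hr2
    simp only [Formula.impl, Formula.bot, hn, hc, e1, e2]
    tauto

lemma mcs_conj_iff {Γ : Set Formula} (h : MCS Γ) {p q : Formula} (hp : IsModal p)
    (hq : IsModal q) : p.conj q ∈ Γ ↔ p ∈ Γ ∧ q ∈ Γ := by
  constructor
  · intro h1
    constructor
    · refine mcs_mem_of_imp h h1 ?_ hp
      refine KT.taut ((hp.conj hq).impl hp) ?_
      intro v hn hc; simp only [Formula.impl, hn, hc]; tauto
    · refine mcs_mem_of_imp h h1 ?_ hq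
      refine KT.taut ((hp.conj hq).impl hq) ?_
      intro v hn hc; simp only [Formula.impl, hn, hc]; tauto
  · rintro ⟨h1, h2⟩
    refine mcs_mem_of_list h (l := [p, q]) (by
      intro r hr
      rcases List.mem_cons.mp hr with rfl | hr2
      · exact h1
      · exact (by simpa using hr2 : r = q) ▸ h2) ?_ (hp.conj hq)
    refine KT.taut ((isModal_conjList (by
      intro r hr
      rcases List.mem_cons.mp hr with rfl | hr2
      · exact hp
      · exact (by simpa using hr2 : r = q) ▸ hq)).impl (hp.conj hq)) ?_
    intro v hn hc
    have e1 := v_conjList v hn hc [p, q]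
    have k1 : (∀ r ∈ [p, q], v r) ↔ v p ∧ v q := by
      constructor
      · exact fun h => ⟨h p (by simp), h q (by simp)⟩
      · intro h r hr
        rcases List.mem_cons.mp hr with rfl | hr2
        · exact h.1
        · rcases List.mem_cons.mp hr2 with rfl | hr3
          · exact h.2
          · simp at hr3
    simp only [Formula.impl, hn, hc, e1, k1]
    tauto

-- ===== Lindenbaum =====
lemma chain_finite_bound {c : Set (Set Formula)} (hchain : IsChain (· ⊆ ·) c)
    (hne : c.Nonempty) : ∀ l : List Formula, (∀ q ∈ l, ∃ T ∈ c, q ∈ T) → ∃ T ∈ c, ∀ q ∈ l, q ∈ T := by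
  intro l
  induction l with
  | nil => exact fun _ => ⟨hne.choose, hne.choose_spec, by simp⟩
  | cons a l ih =>
      intro hmem
      obtain ⟨T, hT, hTl⟩ := ih (fun q hq => hmem q (List.mem_cons_of_mem _ hq))
      obtain ⟨T', hT', haT'⟩ := hmem a (List.mem_cons_self)
      rcases hchain.total hT hT' with hsub | hsub
      · refine ⟨T', hT', ?_⟩
        intro q hq
        rcases List.mem_cons.mp hq with rfl | hq2
        · exact haT'
        · exact hsub (hTl q hq2)
      · refine ⟨T, hT, ?_⟩
        intro q hq
        rcases List.mem_cons.mp hq with rfl | hq2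
        · exact hsub haT'
        · exact hTl q hq2

lemma lindenbaum {S : Set Formula} (hmod : ∀ p ∈ S, IsModal p) (hcon : Consis S) :
    ∃ Γ, MCS Γ ∧ S ⊆ Γ := by
  obtain ⟨m, hSm, hmax⟩ := zorn_subset_nonempty
    {T : Set Formula | (∀ p ∈ T, IsModal p) ∧ Consis T}
    (by
      intro c hcS hchain hcne
      refine ⟨⋃₀ c, ⟨?_, ?_⟩, fun s hs => Set.subset_sUnion_of_mem hs⟩
      · rintro p ⟨T, hT, hpT⟩
        exact (hcS hT).1 p hpT
      · intro l hl hkt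
        obtain ⟨T, hT, hTl⟩ := chain_finite_bound hchain hcne l
          (fun q hq => by
            obtain ⟨T, hT, h2⟩ := hl q hq
            exact ⟨T, hT, h2⟩)
        exact (hcS hT).2 l hTl hkt)
    S ⟨hmod, hcon⟩
  refine ⟨m, ⟨hmax.prop.1, hmax.prop.2, ?_⟩, hSm⟩
  intro p hp hcons
  have hins : insert p m ∈ {T : Set Formula | (∀ p ∈ T, IsModal p) ∧ Consis T} := by
    constructor
    · intro q hq
      rcases hq with rfl | hq2
      · exact hp
      · exact hmax.prop.1 q hq2
    · exact hcons
  have := hmax.le_of_ge hins (Set.subset_insert p m)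
  exact this (Set.mem_insert p m)

-- ===== KT box machinery =====
lemma kt_K' {a b : Formula} (ha : IsModal a) (hb : IsModal b) (h : KT (a.impl b)) :
    KT (a.box.impl b.box) :=
  KT.detach (KT.k a b ha hb) (KT.nec h)

lemma kt_box_conj {X Y : Formula} (hX : IsModal X) (hY : IsModal Y) :
    KT (X.box.impl (Y.box.impl ((X.conj Y).box))) := by
  have t1 : KT (X.impl (Y.impl (X.conj Y))) := by
    refine KT.taut (hX.impl (hY.impl (hX.conj hY))) ?_
    intro v hn hc; simp only [Formula.impl, hn, hc]; tauto
  have s1 : KT (X.box.impl (Y.impl (X.conj Y)).box) := kt_K' hX (hY.impl (hX.conj hY)) t1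
  have s2 : KT ((Y.impl (X.conj Y)).box.impl (Y.box.impl (X.conj Y).box)) :=
    KT.k Y (X.conj Y) hY (hX.conj hY)
  refine kt_mp2 (hX.box.impl ((hY.impl (hX.conj hY)).box))
    (((hY.impl (hX.conj hY)).box).impl (hY.box.impl (hX.conj hY).box))
    (hX.box.impl (hY.box.impl (hX.conj hY).box)) ?_ s1 s2
  intro v hn hc; simp only [Formula.impl, hn, hc]; tauto

lemma kt_boxes : ∀ l : List Formula, (∀ q ∈ l, IsModal q) →
    KT ((conjList (l.map Formula.box)).impl (conjList l).box) := by
  intro l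
  induction l with
  | nil =>
      intro _
      have htop : KT (conjList ([] : List Formula)).box := by
        refine KT.nec (KT.taut (isModal_conjList (by simp)) ?_)
        intro v hn hc
        have := v_conjList v hn hc ([] : List Formula)
        rw [this]
        simp
      refine kt_mp ((isModal_conjList (by simp)).box)
        ((isModal_conjList (by simp)).impl ((isModal_conjList (by simp)).box)) ?_ htop
      intro v hn hc; simp only [Formula.impl, hn, hc]; tauto
  | cons a l ih =>
      intro hmod
      have ha : IsModal a := hmod a (by simp)
      have hl : ∀ q ∈ l, IsModal q := fun q hq => hmod q (by simp [hq])
      have ihl := ih hl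
      have hbc := kt_box_conj ha (isModal_conjList hl)
      -- conjList ((a :: l).map box) = a.box.conj (conjList (l.map box))
      have hMm : IsModal (conjList (l.map Formula.box)) := isModal_conjList (by
        intro q hq
        obtain ⟨r, hr, rfl⟩ := List.mem_map.mp hq
        exact (hl r hr).box)
      refine kt_mp2 ((isModal_conjList (by
          intro q hq
          obtain ⟨r, hr, rfl⟩ := List.mem_map.mp hq
          rcases List.mem_cons.mp hr with rfl | hr2
          · exact ha.box
          · exact (hl r hr2).box)).impl ((isModal_conjList hl).box))
        (ha.box.impl ((isModal_conjList hl).box.impl ((ha.conj (isModal_conjList hl)).box)))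
        ((isModal_conjList (by
          intro q hq
          obtain ⟨r, hr, rfl⟩ := List.mem_map.mp hq
          rcases List.mem_cons.mp hr with rfl | hr2
          · exact ha.box
          · exact (hl r hr2).box)).impl ((ha.conj (isModal_conjList hl)).box))
        ?_ (by
          -- lift ihl to the (a :: l) map form
          show KT ((conjList ((a :: l).map Formula.box)).impl (conjList l).box)
          have : conjList ((a :: l).map Formula.box)
              = (Formula.box a).conj (conjList (l.map Formula.box)) := rfl
          rw [this]
          refine kt_mp (hMm.impl ((isModal_conjList hl).box))
            ((ha.box.conj hMm).impl ((isModal_conjList hl).box)) ?_ ihl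
          intro v hn hc; simp only [Formula.impl, hn, hc]; tauto) hbc
      intro v hn hc
      simp only [List.map_cons, conjList, Formula.impl, hn, hc]
      tauto

-- ===== canonical model =====
def CW : Type := {Γ : Set Formula // MCS Γ}

def Rc (Γ Δ : CW) : Prop := ∀ q, q.box ∈ Γ.1 → q ∈ Δ.1

def Vc (n : ℕ) (Γ : CW) : Prop := Formula.atom n ∈ Γ.1

lemma rc_refl : Reflexive Rc := by
  intro Γ q hq
  have hqm : IsModal q := (Γ.2.1 _ hq).of_box
  exact mcs_mem_of_imp Γ.2 hq (KT.t q hqm) hqm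

lemma mcs_box_iff (Γ : CW) {A : Formula} (hA : IsModal A) :
    A.box ∈ Γ.1 ↔ ∀ Δ : CW, Rc Γ Δ → A ∈ Δ.1 := by
  constructor
  · exact fun h Δ hR => hR A h
  · intro hall
    by_contra hbox
    set S0 : Set Formula := {r | r.box ∈ Γ.1} with hS0
    have hS0m : ∀ r ∈ S0, IsModal r := fun r hr => (Γ.2.1 _ hr).of_box
    have hcons : Consis (insert A.neg S0) := by
      by_contra hni
      obtain ⟨l, hlS, hlm, hkt⟩ := consis_insert_elim hni hS0m hA.neg
      have step1 : KT ((conjList l).impl A) := by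
        refine kt_mp ((isModal_conjList (by
          intro q hq
          rcases List.mem_cons.mp hq with rfl | hq2
          · exact hA.neg
          · exact hlm q hq2)).impl IsModal.bot)
          ((isModal_conjList hlm).impl hA) ?_ hkt
        intro v hn hc
        have e1 := v_conjList v hn hc (A.neg :: l)
        have e2 := v_conjList v hn hc l
        have k1 : (∀ r ∈ l, v r) → ¬ v A → (∀ r ∈ A.neg :: l, v r) := by
          intro h1 h2 r hr
          rcases List.mem_cons.mp hr with rfl | hr2
          · exact (hn A).mpr h2
          · exact h1 r hr2
        simp only [Formula.impl, Formula.bot, hn, hc, e1, e2]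
        tauto
      have step2 : KT ((conjList l).box.impl A.box) := kt_K' (isModal_conjList hlm) hA step1
      have step3 := kt_boxes l hlm
      have step4 : KT ((conjList (l.map Formula.box)).impl A.box) := by
        have hMm : IsModal (conjList (l.map Formula.box)) := isModal_conjList (by
          intro q hq
          obtain ⟨r, hr, rfl⟩ := List.mem_map.mp hq
          exact (hlm r hr).box)
        refine kt_mp2 (hMm.impl ((isModal_conjList hlm).box))
          ((isModal_conjList hlm).box.impl hA.box) (hMm.impl hA.box) ?_ step3 step2
        intro v hn hc; simp only [Formula.impl, hn, hc]; tauto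
      exact hbox (mcs_mem_of_list Γ.2 (by
        intro r hr
        obtain ⟨r', hr', rfl⟩ := List.mem_map.mp hr
        exact hlS r' hr') step4 hA.box)
    obtain ⟨Δ', hΔ', hsub⟩ := lindenbaum (by
      intro p hp
      rcases hp with rfl | hp2
      · exact hA.neg
      · exact hS0m p hp2) hcons
    have hR : Rc Γ ⟨Δ', hΔ'⟩ := fun q hq => hsub (Set.mem_insert_of_mem _ hq)
    have hAmem := hall ⟨Δ', hΔ'⟩ hR
    exact (mcs_neg_iff hΔ' hA).mp (hsub (Set.mem_insert _ _)) hAmem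

-- ===== truth lemma =====
lemma truth_lemma {p : Formula} (hp : IsModal p) :
    ∀ Γ : CW, sat Rc Vc p Γ ↔ p ∈ Γ.1 := by
  induction hp with
  | atom n => exact fun Γ => Iff.rfl
  | neg hq ih =>
      intro Γ
      show (¬ sat Rc Vc _ Γ) ↔ _
      rw [ih Γ, mcs_neg_iff Γ.2 ‹IsModal _›]
  | conj hq hr ih1 ih2 =>
      intro Γ
      show (sat Rc Vc _ Γ ∧ sat Rc Vc _ Γ) ↔ _
      rw [ih1 Γ, ih2 Γ, mcs_conj_iff Γ.2 ‹IsModal _› ‹IsModal _›]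
  | box hq ih =>
      intro Γ
      rw [sat_box Rc Vc rc_refl, mcs_box_iff Γ ‹IsModal _›]
      constructor
      · intro h Δ hR
        exact (ih Δ).mp (h Δ hR)
      · intro h Δ hR
        exact (ih Δ).mpr (h Δ hR)

-- ===== C2 proves KT =====
lemma c2_mp {a b : Formula} (ht : IsTautology (a.impl b)) (h : C2 a) : C2 b :=
  DerivC2.detach (DerivC2.taut ht) h

lemma c2_mp2 {a b c : Formula} (ht : IsTautology (a.impl (b.impl c)))
    (h1 : C2 a) (h2 : C2 b) : C2 c :=
  DerivC2.detach (DerivC2.detach (DerivC2.taut ht) h1) h2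

lemma c2_mp3 {a b c d : Formula} (ht : IsTautology (a.impl (b.impl (c.impl d))))
    (h1 : C2 a) (h2 : C2 b) (h3 : C2 c) : C2 d :=
  DerivC2.detach (DerivC2.detach (DerivC2.detach (DerivC2.taut ht) h1) h2) h3

lemma c2_mp4 {a b c d e : Formula} (ht : IsTautology (a.impl (b.impl (c.impl (d.impl e)))))
    (h1 : C2 a) (h2 : C2 b) (h3 : C2 c) (h4 : C2 d) : C2 e :=
  DerivC2.detach (DerivC2.detach (DerivC2.detach (DerivC2.detach (DerivC2.taut ht) h1) h2) h3) h4

lemma c2_cond_mono {a b s : Formula} (h : C2 (a.impl b)) : C2 ((s.cond a).impl (s.cond b)) := by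
  have h1 : C2 ((a.conj a).impl b) := by
    refine c2_mp ?_ h
    intro v hn hc; simp only [Formula.impl, hn, hc]; tauto
  have h2 := DerivC2.normality s h1
  refine c2_mp ?_ h2
  intro v hn hc; simp only [Formula.impl, hn, hc]; tauto

lemma c2_cond_self_imp {t X : Formula} (ht : IsTautology (t.impl X)) : C2 (t.cond X) :=
  DerivC2.detach (c2_cond_mono (DerivC2.taut ht)) (DerivC2.id t)

lemma c2_ex {A : Formula} (r : Formula) : C2 (A.box.impl (A.neg.cond r)) := by
  have hpre : C2 ((A.conj A.neg).impl r) := by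
    refine DerivC2.taut ?_
    intro v hn hc; simp only [Formula.impl, hn, hc]; tauto
  have hn := DerivC2.normality A.neg hpre
  have hid : C2 (A.neg.cond A.neg) := DerivC2.id _
  refine c2_mp2 ?_ hn hid
  intro v hn hc; simp only [Formula.box, Formula.impl, hn, hc]; tauto

lemma c2_strict {A s : Formula} : C2 (A.box.impl (s.cond A)) := by
  set t : Formula := s.conj A.neg with ht
  have h1 : C2 (t.cond s) := c2_cond_self_imp (by
    intro v hn hc; simp only [ht, Formula.impl, hn, hc]; tauto)
  have h2 : C2 (t.cond A.neg) := c2_cond_self_imp (by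
    intro v hn hc; simp only [ht, Formula.impl, hn, hc]; tauto)
  have hTX : ∀ r, C2 (A.box.impl (t.cond r)) := by
    intro r
    have hrecip := DerivC2.recip (Ax := fun _ => False) A.neg t r
    refine c2_mp4 ?_ (c2_ex (A := A) t) h2 (c2_ex (A := A) r) hrecip
    intro v hn hc; simp only [Formula.box, Formula.impl, hn, hc]; tauto
  have h5 : C2 ((s.cond A.neg).impl (s.cond t)) := by
    have hpre : C2 ((s.conj A.neg).impl t) := by
      refine DerivC2.taut ?_
      intro v hn hc; simp only [ht, Formula.impl, hn, hc]; tauto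
    have hnorm := DerivC2.normality s hpre
    refine c2_mp2 ?_ hnorm (DerivC2.id s)
    intro v hn hc; simp only [Formula.impl, hn, hc]; tauto
  have hrecip2 := DerivC2.recip (Ax := fun _ => False) t s A
  have h6 : C2 (A.box.impl ((s.cond A.neg).impl (s.cond A))) := by
    refine c2_mp4 ?_ h1 h5 (hTX A) hrecip2
    intro v hn hc; simp only [Formula.box, Formula.impl, hn, hc]; tauto
  have hcem := DerivC2.cem (Ax := fun _ => False) s A
  refine c2_mp2 ?_ h6 hcem
  intro v hn hc; simp only [Formula.box, Formula.impl, Formula.disj, hn, hc]; tauto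

lemma c2_K {A B : Formula} : C2 ((A.impl B).box.impl (A.box.impl B.box)) := by
  have s1 : C2 ((A.impl B).box.impl (B.neg.cond (A.impl B))) := c2_strict
  have s2 : C2 (A.box.impl (B.neg.cond A)) := c2_strict
  have hpre : C2 (((A.impl B).conj A).impl B) := by
    refine DerivC2.taut ?_
    intro v hn hc; simp only [Formula.impl, hn, hc]; tauto
  have hnorm := DerivC2.normality B.neg hpre
  refine c2_mp3 ?_ s1 s2 hnorm
  intro v hn hc; simp only [Formula.box, Formula.impl, hn, hc]; tauto

lemma c2_T {A : Formula} : C2 (A.box.impl A) := by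
  refine c2_mp ?_ (DerivC2.mpAx A.neg A)
  intro v hn hc; simp only [Formula.box, Formula.impl, hn, hc]; tauto

lemma c2_nec {A : Formula} (h : C2 A) : C2 A.box := by
  have hpre : C2 ((A.neg.conj A.neg).impl A) := by
    refine c2_mp ?_ h
    intro v hn hc; simp only [Formula.impl, hn, hc]; tauto
  have hnorm := DerivC2.normality A.neg hpre
  refine c2_mp2 ?_ hnorm (DerivC2.id A.neg)
  intro v hn hc; simp only [Formula.box, Formula.impl, hn, hc]; tauto

/-- for any sentence in the modal fragment of L, it is a theorem of C2
iff it is a theorem of KT. -/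
theorem c2_modal_fragment_is_KT (p : Formula) (hp : IsModal p) : C2 p ↔ KT p := by
  constructor
  · intro h
    by_contra hKT
    have hcon : Consis {p.neg} := by
      intro l hl hkt
      apply hKT
      refine kt_mp ((isModal_conjList (fun q hq => (hl q hq : q = p.neg) ▸ hp.neg)).impl
        IsModal.bot) hp ?_ hkt
      intro v hn hc
      have e := v_conjList v hn hc l
      simp only [Formula.impl, Formula.bot, hn, hc, e]
      rintro ⟨h1, h2⟩
      exact absurd (⟨fun q hq => by
        rw [(hl q hq : q = p.neg), hn]; exact h2, by tauto⟩) h1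
    obtain ⟨Γ, hΓ, hsub⟩ := lindenbaum (fun q hq => (hq : q = p.neg) ▸ hp.neg) hcon
    have hsat := c2_sound Rc Vc rc_refl h ⟨Γ, hΓ⟩
    rw [truth_lemma hp ⟨Γ, hΓ⟩] at hsat
    exact (mcs_neg_iff hΓ hp).mp (hsub rfl) hsat
  · intro h
    clear hp
    induction h with
    | taut _ ht => exact DerivC2.taut ht
    | k p q _ _ => exact c2_K
    | t p _ => exact c2_T
    | detach h1 h2 ih1 ih2 => exact DerivC2.detach ih1 ih2
    | nec _ ih => exact c2_nec ih
end

section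
/- Pointed ω-sequence models (σ,W,V) and (τ,W',V') verify exactly the same sentences of L whenever for all j,k ∈ ℕ: σ[j:] ∈ V(p_k) if and only if τ[j:] ∈ V'(p_k). -/
/-- The `n`-th tail of an ω-sequence: σ[n:](m) = σ(n+m). -/
def seqTail {P : Type} (σ : ℕ → P) (n : ℕ) : ℕ → P := fun m => σ (n + m)

/-- `W` is closed under tailhood: if it contains σ then it contains every tail
of σ. -/
def OmegaClosed {P : Type} (W : Set (ℕ → P)) : Prop :=
  ∀ σ ∈ W, ∀ n, seqTail σ n ∈ W

/-- Truth at an ω-sequence of an ω-sequence model: atoms via the valuation,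
Booleans classically, and `p > q` is true at σ iff either no tail of σ in `W`
satisfies `p`, or `q` is true at the first (least-rank) tail of σ in `W`
satisfying `p`. -/
def OmegaTruth {P : Type} (W : Set (ℕ → P)) (V : ℕ → Set (ℕ → P)) :
    Formula → (ℕ → P) → Prop
  | .atom k, σ => σ ∈ V k
  | .neg p, σ => ¬ OmegaTruth W V p σ
  | .conj p q, σ => OmegaTruth W V p σ ∧ OmegaTruth W V q σ
  | .cond p q, σ =>
      (∀ n, seqTail σ n ∈ W → ¬ OmegaTruth W V p (seqTail σ n)) ∨
      ∃ n, seqTail σ n ∈ W ∧ OmegaTruth W V p (seqTail σ n) ∧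
        OmegaTruth W V q (seqTail σ n) ∧
        ∀ m < n, ¬ (seqTail σ m ∈ W ∧ OmegaTruth W V p (seqTail σ m))

theorem seqTail_seqTail {P : Type} (σ : ℕ → P) (j n : ℕ) :
    seqTail (seqTail σ j) n = seqTail σ (j + n) := by
  funext m
  simp only [seqTail, Nat.add_assoc]

@[simp]
theorem seqTail_zero {P : Type} (σ : ℕ → P) : seqTail σ 0 = σ := by
  funext m
  simp only [seqTail, Nat.zero_add]

/-- A conditional at σ[j:] only inspects the tails σ[j+n:], so the induction has to run over all
tails at once. -/
theorem omegaTruth_seqTail_iff {P P' : Type} {W : Set (ℕ → P)} {W' : Set (ℕ → P')}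
    {V : ℕ → Set (ℕ → P)} {V' : ℕ → Set (ℕ → P')} {σ : ℕ → P} {τ : ℕ → P'}
    (hmem : ∀ j, seqTail σ j ∈ W ↔ seqTail τ j ∈ W')
    (hval : ∀ j k, seqTail σ j ∈ V k ↔ seqTail τ j ∈ V' k) (p : Formula) (j : ℕ) :
    OmegaTruth W V p (seqTail σ j) ↔ OmegaTruth W' V' p (seqTail τ j) := by
  induction p generalizing j with
  | atom k => exact hval j k
  | neg p ih => exact not_congr (ih j)
  | conj p q ihp ihq => exact and_congr (ihp j) (ihq j)
  | cond p q ihp ihq => simp only [OmegaTruth, seqTail_seqTail, hmem, ihp, ihq]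

theorem omega_models_equivalent_general {P P' : Type}
    (W : Set (ℕ → P)) (W' : Set (ℕ → P'))
    (hW : OmegaClosed W) (hW' : OmegaClosed W')
    (V : ℕ → Set (ℕ → P)) (V' : ℕ → Set (ℕ → P'))
    (σ : ℕ → P) (τ : ℕ → P') (hσ : σ ∈ W) (hτ : τ ∈ W')
    (h : ∀ j k : ℕ, seqTail σ j ∈ V k ↔ seqTail τ j ∈ V' k) :
    ∀ p : Formula, OmegaTruth W V p σ ↔ OmegaTruth W' V' p τ := by
  intro p
  have hmem (j : ℕ) : seqTail σ j ∈ W ↔ seqTail τ j ∈ W' :=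
    iff_of_true (hW σ hσ j) (hW' τ hτ j)
  simpa only [seqTail_zero] using omegaTruth_seqTail_iff hmem h p 0

/-- pointed ω-sequence models (σ,W,V) and (τ,W',V') verify exactly the
same sentences of L whenever for all j,k ∈ ℕ: σ[j:] ∈ V(p_k) iff τ[j:] ∈ V'(p_k). -/
theorem omega_models_equivalent {P P' : Type} [Nonempty P] [Nonempty P']
    (W : Set (ℕ → P)) (W' : Set (ℕ → P'))
    (hW : OmegaClosed W) (hW' : OmegaClosed W')
    (V : ℕ → Set (ℕ → P)) (V' : ℕ → Set (ℕ → P'))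
    (σ : ℕ → P) (τ : ℕ → P') (hσ : σ ∈ W) (hτ : τ ∈ W')
    (h : ∀ j k : ℕ, seqTail σ j ∈ V k ↔ seqTail τ j ∈ V' k) :
    ∀ p : Formula, OmegaTruth W V p σ ↔ OmegaTruth W' V' p τ :=
  omega_models_equivalent_general W W' hW hW' V V' σ τ hσ hτ h
end
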